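/- arXiv:2203.06266 — 6 statements merged into one kernel-verified Lean document; each statement's English description precedes it below -/
import Mathlib

section
/- If α is Diophantine of type κ, i.e. there exists c>0 such that |α − p/q| ≥ c/q^κ for all integers p and positive integers q, then for any real P > 2/√3, the shortest nonzero vector length a of the lattice Δ = {(P(x+αy), y/P) : x,y ∈ ℤ} satisfies a^{-1} ≤ c^{-1/κ} · P^{1−2/κ}. -/
open Real

/-!
For a nonzero lattice vector `v = (P(x + αy), y/P)` one has `q/P ≤ ‖v‖` and `P·c/q^(κ-1) ≤ ‖v‖`
for some `q ≥ 1`: when `y ≠ 0` take `q = |y|`, the second bound being the Diophantine condition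
at `-x/y`; when `y = 0` take `q = 1` and use `‖v‖ ≥ P ≥ 1 ≥ c`. Multiplying the `(κ-1)`-st power
of the first bound by the second eliminates `q` and gives `‖v‖^κ ≥ c·P^(2-κ)`.
-/

def IsDiophantineOfType (α κ c : ℝ) : Prop :=
  ∀ (p : ℤ) (q : ℕ), 0 < q → c / (q : ℝ) ^ κ ≤ |α - (p : ℝ) / (q : ℝ)|

namespace IsDiophantineOfType

variable {α κ c : ℝ}

theorem le_half (h : IsDiophantineOfType α κ c) : c ≤ 1 / 2 := by
  have h1 := h (round α) 1 one_pos
  simp only [Nat.cast_one, one_rpow, div_one] at h1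
  exact h1.trans (abs_sub_round α)

theorem div_rpow_sub_one_le_abs_mul_sub (h : IsDiophantineOfType α κ c) (p : ℤ) {q : ℕ}
    (hq : 0 < q) : c / (q : ℝ) ^ (κ - 1) ≤ |α * q - p| := by
  have hq' : (0 : ℝ) < q := Nat.cast_pos.2 hq
  have hp := h p q hq
  rw [show α - p / q = (α * q - p) / q by field_simp, abs_div, abs_of_pos hq',
    le_div_iff₀ hq'] at hp
  rwa [rpow_sub_one hq'.ne', div_div_eq_mul_div, mul_div_right_comm]

theorem div_abs_rpow_le_abs_add_mul (h : IsDiophantineOfType α κ c) (x : ℤ) {y : ℤ}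
    (hy : y ≠ 0) : c / |(y : ℝ)| ^ (κ - 1) ≤ |(x : ℝ) + α * y| := by
  obtain ⟨q, hq, rfl | rfl⟩ : ∃ q : ℕ, 0 < q ∧ (y = q ∨ y = -q) :=
    ⟨y.natAbs, Int.natAbs_pos.2 hy, Int.natAbs_eq y⟩
  · simpa [add_comm] using h.div_rpow_sub_one_le_abs_mul_sub (-x) hq
  · simpa [abs_sub_comm, ← sub_eq_add_neg] using h.div_rpow_sub_one_le_abs_mul_sub x hq

end IsDiophantineOfType

theorem rpow_sub_one_mul_rpow_inv_le {u v t κ : ℝ} (hu : 0 ≤ u) (hv : 0 ≤ v) (hut : u ≤ t)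
    (hvt : v ≤ t) (hκ : 1 ≤ κ) : (u ^ (κ - 1) * v) ^ κ⁻¹ ≤ t := by
  have ht : 0 ≤ t := hu.trans hut
  have hκ0 : κ ≠ 0 := by positivity
  calc (u ^ (κ - 1) * v) ^ κ⁻¹ ≤ (t ^ κ) ^ κ⁻¹ := by
        gcongr
        calc u ^ (κ - 1) * v ≤ t ^ (κ - 1) * t ^ (1 : ℝ) := by
              rw [rpow_one]; gcongr
          _ = t ^ κ := by rw [← rpow_add' ht (by simpa using hκ0), sub_add_cancel]
    _ = t := rpow_rpow_inv ht hκ0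

theorem rpow_inv_le_of_div_le_of_mul_div_le {c κ P q t : ℝ} (hc : 0 ≤ c) (hκ : 1 ≤ κ)
    (hP : 0 < P) (hq : 0 < q) (hqt : q / P ≤ t) (hct : P * (c / q ^ (κ - 1)) ≤ t) :
    (c * P ^ (2 - κ)) ^ κ⁻¹ ≤ t := by
  convert rpow_sub_one_mul_rpow_inv_le (by positivity) (by positivity) hqt hct hκ using 2
  have hPκ : P ^ (2 - κ) * P ^ (κ - 1) = P := by
    rw [← rpow_add hP]; norm_num
  have : (0 : ℝ) < q ^ (κ - 1) := by positivity
  have : (0 : ℝ) < P ^ (κ - 1) := by positivity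
  rw [div_rpow hq.le hP.le]
  field_simp
  linear_combination c * hPκ

theorem IsDiophantineOfType.rpow_inv_le_norm {α κ c P : ℝ} (h : IsDiophantineOfType α κ c)
    (hκ : 1 ≤ κ) (hc : 0 ≤ c) (hP : 1 ≤ P) {x y : ℤ} (hxy : ¬(x = 0 ∧ y = 0)) :
    (c * P ^ (2 - κ)) ^ κ⁻¹ ≤ √((P * ((x : ℝ) + α * y)) ^ 2 + ((y : ℝ) / P) ^ 2) := by
  have hP0 : 0 < P := one_pos.trans_le hP
  set t := √((P * ((x : ℝ) + α * y)) ^ 2 + ((y : ℝ) / P) ^ 2)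
  have hxt : P * |(x : ℝ) + α * y| ≤ t := calc
    _ = |P * ((x : ℝ) + α * y)| := by rw [abs_mul, abs_of_pos hP0]
    _ ≤ t := abs_le_sqrt (le_add_of_nonneg_right (sq_nonneg _))
  have hyt : |(y : ℝ)| / P ≤ t := calc
    _ = |(y : ℝ) / P| := by rw [abs_div, abs_of_pos hP0]
    _ ≤ t := abs_le_sqrt (le_add_of_nonneg_left (sq_nonneg _))
  by_cases hy : y = 0
  · have hPt : P ≤ t := by
      have hx : (1 : ℝ) ≤ |(x : ℝ)| := by
        exact_mod_cast Int.one_le_abs fun hx ↦ hxy ⟨hx, hy⟩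
      simp only [hy, Int.cast_zero, mul_zero, add_zero] at hxt
      nlinarith
    refine rpow_inv_le_of_div_le_of_mul_div_le hc hκ hP0 one_pos ?_ ?_
    · exact ((div_le_one hP0).2 hP).trans (hP.trans hPt)
    · rw [one_rpow, div_one]
      nlinarith [h.le_half]
  · exact rpow_inv_le_of_div_le_of_mul_div_le hc hκ hP0
      (abs_pos.2 (Int.cast_ne_zero.2 hy)) hyt
      (hxt.trans' (mul_le_mul_of_nonneg_left (h.div_abs_rpow_le_abs_add_mul x hy) hP0.le))

theorem stmt_0 (α κ c P : ℝ) (hκ : 2 ≤ κ) (hc : 0 < c)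
    (hdio : ∀ (p : ℤ) (q : ℕ), 0 < q → c / (q : ℝ) ^ κ ≤ |α - (p : ℝ) / (q : ℝ)|)
    (hP : 2 / Real.sqrt 3 < P) :
    (sInf {r : ℝ | ∃ x y : ℤ, ¬(x = 0 ∧ y = 0) ∧
        r = Real.sqrt ((P * ((x : ℝ) + α * y)) ^ 2 + ((y : ℝ) / P) ^ 2)})⁻¹
      ≤ c ^ (-(1 / κ)) * P ^ (1 - 2 / κ) := by
  have hP1 : 1 ≤ P := by
    refine (lt_of_le_of_lt ?_ hP).le
    rw [le_div_iff₀ (by positivity), one_mul, sqrt_le_iff]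
    norm_num
  have hP0 : 0 < P := one_pos.trans_le hP1
  set S := {r : ℝ | ∃ x y : ℤ, ¬(x = 0 ∧ y = 0) ∧
    r = Real.sqrt ((P * ((x : ℝ) + α * y)) ^ 2 + ((y : ℝ) / P) ^ 2)}
  have hlb : (c * P ^ (2 - κ)) ^ κ⁻¹ ≤ sInf S := by
    refine le_csInf ⟨_, 1, 0, by norm_num, rfl⟩ ?_
    rintro r ⟨x, y, hxy, rfl⟩
    exact IsDiophantineOfType.rpow_inv_le_norm hdio (by linarith) hc.le hP1 hxy
  refine (inv_anti₀ (by positivity) hlb).trans_eq ?_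
  rw [mul_rpow hc.le (by positivity), ← rpow_mul hP0.le, mul_inv, ← rpow_neg hc.le,
    ← rpow_neg hP0.le, one_div]
  congr 2
  field_simp
  ring
end

section
/- The first successive minimum of any unimodular lattice in ℝ² is at most 2/√3: for every Δ = g·ℤ² with g ∈ SL₂(ℝ), there exists a nonzero v ∈ Δ with ‖v‖ ≤ 2/√3. -/
/-!
Identify ℝ² with ℂ, so that the lattice is ℤ w₁ + ℤ w₂ with w₁, w₂ the columns of `g`, and
normalise it to ℤ + ℤ τ with τ = w₂ / w₁ ∈ ℍ. Moving τ into the fundamental domain of SL(2, ℤ)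
by some γ gives `Im (γ • τ) ≥ √3 / 2`; since `Im (γ • τ) = Im τ / |c τ + d|²` for the bottom row
(c, d) of γ, the vector d w₁ + c w₂ has squared length at most `2 / √3 ≤ (2 / √3)²`.
-/

open UpperHalfPlane Complex

lemma ModularGroup.sqrt_three_le_two_mul_im_of_mem_fd {τ : ℍ} (h : τ ∈ ModularGroup.fd) :
    √3 ≤ 2 * τ.im :=
  (Real.sqrt_le_left (by linarith [τ.im_pos])).2
    (by nlinarith [ModularGroup.three_le_four_mul_im_sq_of_mem_fd h])

lemma UpperHalfPlane.exists_normSq_mul_add_le (τ : ℍ) :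
    ∃ c d : ℤ, ¬(c = 0 ∧ d = 0) ∧ Complex.normSq (c * τ + d) ≤ 2 / √3 * τ.im := by
  obtain ⟨γ, hγ⟩ := ModularGroup.exists_smul_mem_fd τ
  refine ⟨γ 1 0, γ 1 1, ?_, ?_⟩
  · rintro ⟨hc, hd⟩
    exact not_isCoprime_zero_zero (hc ▸ hd ▸ ModularGroup.bottom_row_coprime γ)
  · have hdenom : 0 < Complex.normSq (denom γ τ) := Complex.normSq_pos.2 (denom_ne_zero γ τ)
    have him : (γ • τ).im * Complex.normSq (denom γ τ) = τ.im := by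
      rw [ModularGroup.im_smul_eq_div_normSq, div_mul_cancel₀ _ hdenom.ne']
    have hfd := ModularGroup.sqrt_three_le_two_mul_im_of_mem_fd hγ
    rw [← ModularGroup.denom_apply, div_mul_eq_mul_div, le_div_iff₀ (by positivity), ← him]
    nlinarith

lemma Complex.exists_normSq_intCast_mul_add_le {w₁ w₂ : ℂ}
    (h : 0 < w₁.re * w₂.im - w₁.im * w₂.re) :
    ∃ x y : ℤ, ¬(x = 0 ∧ y = 0) ∧
      normSq (x * w₁ + y * w₂) ≤ 2 / √3 * (w₁.re * w₂.im - w₁.im * w₂.re) := by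
  have hw₁ : w₁ ≠ 0 := by rintro rfl; simp at h
  have hn := normSq_pos.2 hw₁
  have hτ : (w₂ / w₁).im * normSq w₁ = w₁.re * w₂.im - w₁.im * w₂.re := by
    rw [div_im]; field_simp
  obtain ⟨c, d, hcd, hle⟩ := exists_normSq_mul_add_le ⟨w₂ / w₁, by nlinarith⟩
  refine ⟨d, c, fun h ↦ hcd h.symm, ?_⟩
  have hfactor : (d : ℂ) * w₁ + c * w₂ = w₁ * (c * (w₂ / w₁) + d) := by field_simp; ring
  rw [hfactor, normSq_mul, ← hτ]
  calc normSq w₁ * normSq (c * (w₂ / w₁) + d) ≤ normSq w₁ * (2 / √3 * (w₂ / w₁).im) :=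
        mul_le_mul_of_nonneg_left hle hn.le
    _ = _ := by ring

theorem stmt_2 (g : Matrix (Fin 2) (Fin 2) ℝ) (hg : g.det = 1) :
    ∃ x y : ℤ, ¬(x = 0 ∧ y = 0) ∧
      Real.sqrt ((g 0 0 * x + g 0 1 * y) ^ 2 + (g 1 0 * x + g 1 1 * y) ^ 2)
        ≤ 2 / Real.sqrt 3 := by
  have hcovol : (⟨g 0 0, g 1 0⟩ : ℂ).re * (⟨g 0 1, g 1 1⟩ : ℂ).im
      - (⟨g 0 0, g 1 0⟩ : ℂ).im * (⟨g 0 1, g 1 1⟩ : ℂ).re = 1 := by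
    rw [← hg, Matrix.det_fin_two]; ring
  obtain ⟨x, y, hxy, hle⟩ := exists_normSq_intCast_mul_add_le (hcovol ▸ one_pos)
  refine ⟨x, y, hxy, ?_⟩
  have hnorm : (g 0 0 * x + g 0 1 * y) ^ 2 + (g 1 0 * x + g 1 1 * y) ^ 2
      = normSq (x * ⟨g 0 0, g 1 0⟩ + y * ⟨g 0 1, g 1 1⟩) := by
    simp only [normSq_apply, add_re, mul_re, add_im, mul_im, intCast_re, intCast_im]
    ring
  have hone : 1 ≤ 2 / √3 :=
    (one_le_div (by positivity)).2 ((Real.sqrt_le_left zero_le_two).2 (by norm_num))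
  rw [hcovol, mul_one] at hle
  rw [hnorm]
  calc √(normSq _) ≤ √(2 / √3) := Real.sqrt_le_sqrt hle
    _ ≤ 2 / √3 := Real.sqrt_le_self_iff.2 (Or.inr hone)
end

section
/- Let P, Q > 0, α ∈ ℝ, C > 0, u ∈ ℝ², and Z, ζ > 0. Then the sum over v in the lattice Δ^α_{P,Q} = {(P(x+αy), Qy) : x,y ∈ ℤ} of exp(−C‖v+u‖²) is at most (1 + 𝒩(√2(Zζ)^{1/2})) · Σ_{w ∈ Δ^0_{Pζ, QZ}} exp(−C‖w‖²/4), where 𝒩(r) counts points of norm ≤ r in the unimodular lattice Δ^α_{(Z/ζ)^{1/2}} = {((Z/ζ)^{1/2}(x+αz), (ζ/Z)^{1/2} z) : x,z ∈ ℤ} and Δ^0_{Pζ,QZ} = {(Pζ·m₁, QZ·m₂) : m₁,m₂ ∈ ℤ}. -/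
/-!
Round the shifted lattice point `v + u` coordinatewise to the nearest point `w` of the grid
`Pζ ℤ × QZ ℤ`. Rounding loses at most a factor two in each coordinate, so
`exp (-C ‖v + u‖²) ≤ exp (-C ‖w‖² / 4)`. Two lattice points rounded to the same `w` differ by a
lattice vector `(P (x + α y), Q y)` with `|x + α y| ≤ ζ` and `|y| ≤ Z`, and such `(x, y)` lie in
the ball of radius `√2 (Zζ)^{1/2}` of the unimodular lattice `Δ^α_{(Z/ζ)^{1/2}}`. Hence every
grid point is hit by at most `𝒩(√2 (Zζ)^{1/2})` lattice points.
-/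

open Real

lemma abs_sub_mul_round_div_le {c : ℝ} (hc : 0 < c) (t : ℝ) :
    |t - c * round (t / c)| ≤ c / 2 := by
  have h : t - c * round (t / c) = c * (t / c - round (t / c)) := by field_simp
  rw [h, abs_mul, abs_of_pos hc]
  linarith [mul_le_mul_of_nonneg_left (abs_sub_round (t / c)) hc.le]

lemma sq_mul_round_div_le {c : ℝ} (hc : 0 < c) (t : ℝ) :
    (c * round (t / c)) ^ 2 ≤ 4 * t ^ 2 := by
  rcases eq_or_ne (round (t / c)) 0 with h0 | h0
  · simp [h0]; positivity
  -- a nonzero grid point has norm at least `c`, twice the rounding error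
  have hcw : c ≤ |c * round (t / c)| := by
    rw [abs_mul, abs_of_pos hc]
    exact le_mul_of_one_le_right hc.le (by exact_mod_cast Int.one_le_abs h0)
  have herr := abs_sub_mul_round_div_le hc t
  have hw : |c * round (t / c)| ≤ 2 * |t| := by
    linarith [abs_sub_abs_le_abs_sub (c * round (t / c)) t, abs_sub_comm t (c * round (t / c))]
  nlinarith [sq_abs t, sq_abs (c * round (t / c)), abs_nonneg (c * round (t / c))]

lemma abs_sub_le_of_round_div_eq {c t t' : ℝ} (hc : 0 < c)
    (h : round (t / c) = round (t' / c)) : |t - t'| ≤ c := by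
  have h₁ := abs_sub_mul_round_div_le hc t
  have h₂ := abs_sub_mul_round_div_le hc t'
  rw [← h] at h₂
  calc |t - t'| = |(t - c * round (t / c)) - (t' - c * round (t / c))| := by ring_nf
    _ ≤ c := by linarith [abs_sub (t - c * round (t / c)) (t' - c * round (t / c))]

lemma abs_sub_le_of_round_affine_eq {a c s s' w : ℝ} (ha : 0 < a) (hc : 0 < c)
    (h : round ((a * s + w) / (a * c)) = round ((a * s' + w) / (a * c))) : |s - s'| ≤ c := by
  have h' := abs_sub_le_of_round_div_eq (mul_pos ha hc) h
  rwa [show a * s + w - (a * s' + w) = a * (s - s') by ring, abs_mul, abs_of_pos ha,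
    mul_le_mul_iff_right₀ ha] at h'

lemma summable_exp_neg_mul_int_sq {b : ℝ} (hb : 0 < b) :
    Summable fun n : ℤ => exp (-b * (n : ℝ) ^ 2) := by
  have h : Summable fun n : ℕ => exp (-b * (n : ℝ) ^ 2) :=
    summable_exp_nat_mul_of_ge (neg_lt_zero.mpr hb) fun i => by
      exact_mod_cast Nat.le_self_pow two_ne_zero i
  exact .of_nat_of_neg (by simpa using h) (by simpa using h)

lemma summable_exp_neg_int_sq_add_sq {a b : ℝ} (ha : 0 < a) (hb : 0 < b) :
    Summable fun m : ℤ × ℤ => exp (-(a * (m.1 : ℝ) ^ 2 + b * (m.2 : ℝ) ^ 2)) :=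
  ((summable_exp_neg_mul_int_sq ha).mul_of_nonneg (summable_exp_neg_mul_int_sq hb)
    (fun _ => (exp_pos _).le) (fun _ => (exp_pos _).le)).congr fun m => by
      rw [← exp_add]
      ring_nf

lemma finite_setOf_abs_intCast_le (b : ℝ) : {n : ℤ | |(n : ℝ)| ≤ b}.Finite :=
  (Set.finite_Icc (-⌊b⌋) ⌊b⌋).subset fun n (hn : |(n : ℝ)| ≤ b) => by
    obtain ⟨h₁, h₂⟩ := abs_le.mp hn
    exact ⟨by rw [neg_le]; exact Int.le_floor.mpr (by push_cast; linarith),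
      Int.le_floor.mpr h₂⟩

lemma finite_setOf_abs_add_mul_le (α a b : ℝ) :
    {p : ℤ × ℤ | |(p.1 : ℝ) + α * p.2| ≤ a ∧ |(p.2 : ℝ)| ≤ b}.Finite := by
  refine ((finite_setOf_abs_intCast_le (a + |α| * b)).prod
    (finite_setOf_abs_intCast_le b)).subset fun p ⟨h₁, h₂⟩ => ⟨?_, h₂⟩
  calc |(p.1 : ℝ)| = |((p.1 : ℝ) + α * p.2) - α * p.2| := by ring_nf
    _ ≤ |(p.1 : ℝ) + α * p.2| + |α| * |(p.2 : ℝ)| := (abs_sub _ _).trans_eq (by rw [abs_mul])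
    _ ≤ a + |α| * b := add_le_add h₁ (mul_le_mul_of_nonneg_left h₂ (abs_nonneg α))

-- The ball of radius `√2 (Zζ)^{1/2}` in the lattice `Δ^α_{(Z/ζ)^{1/2}}`, in coordinates.
lemma sqrt_unimodular_le_iff {Z ζ : ℝ} (hZ : 0 < Z) (hζ : 0 < ζ) (x y : ℝ) :
    √((√(Z / ζ) * x) ^ 2 + (√(ζ / Z) * y) ^ 2) ≤ √2 * √(Z * ζ) ↔
      (x / ζ) ^ 2 + (y / Z) ^ 2 ≤ 2 := by
  have h : (√(Z / ζ) * x) ^ 2 + (√(ζ / Z) * y) ^ 2 = Z * ζ * ((x / ζ) ^ 2 + (y / Z) ^ 2) := by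
    rw [mul_pow, mul_pow, sq_sqrt (by positivity), sq_sqrt (by positivity)]
    field_simp
  rw [← sqrt_mul zero_le_two, sqrt_le_sqrt_iff (by positivity), h, mul_comm 2,
    mul_le_mul_iff_right₀ (by positivity)]

lemma abs_le_two_mul_of_div_sq_le_two {x c : ℝ} (hc : 0 < c) (h : (x / c) ^ 2 ≤ 2) :
    |x| ≤ 2 * c := by
  have h' : |x / c| ≤ 2 := abs_le_of_sq_le_sq (by linarith) zero_le_two
  rwa [abs_div, abs_of_pos hc, div_le_iff₀ hc] at h'

lemma finite_setOf_div_sq_add_div_sq_le_two {ζ Z : ℝ} (hζ : 0 < ζ) (hZ : 0 < Z) (α : ℝ) :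
    {p : ℤ × ℤ | (((p.1 : ℝ) + α * p.2) / ζ) ^ 2 + ((p.2 : ℝ) / Z) ^ 2 ≤ 2}.Finite :=
  (finite_setOf_abs_add_mul_le α (2 * ζ) (2 * Z)).subset fun p
    (hp : (((p.1 : ℝ) + α * p.2) / ζ) ^ 2 + ((p.2 : ℝ) / Z) ^ 2 ≤ 2) =>
    ⟨abs_le_two_mul_of_div_sq_le_two hζ (by linarith [sq_nonneg ((p.2 : ℝ) / Z)]),
      abs_le_two_mul_of_div_sq_le_two hZ (by linarith [sq_nonneg (((p.1 : ℝ) + α * p.2) / ζ)])⟩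

lemma div_sq_le_one_of_abs_le {x c : ℝ} (hc : 0 < c) (h : |x| ≤ c) : (x / c) ^ 2 ≤ 1 := by
  rw [sq_le_one_iff_abs_le_one, abs_div, abs_of_pos hc]
  exact div_le_one_of_le₀ h hc.le

lemma encard_preimage_singleton_le_of_sub_mem {G κ : Type*} [AddGroup G] {φ : G → κ}
    {B : Set G} (h : ∀ p q, φ p = φ q → p - q ∈ B) (k : κ) :
    (φ ⁻¹' {k}).encard ≤ B.encard := by
  rcases (φ ⁻¹' {k}).eq_empty_or_nonempty with h₀ | ⟨q, hq⟩
  · simp [h₀]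
  calc (φ ⁻¹' {k}).encard ≤ ((· + q) '' B).encard :=
        Set.encard_le_encard fun p hp => ⟨p - q, h p q (hp.trans hq.symm), sub_add_cancel p q⟩
    _ = B.encard := (add_left_injective q).injOn.encard_image

lemma tsum_le_mul_tsum_of_encard_fiber_le {ι κ : Type*} {f : ι → ℝ} {g : κ → ℝ} (φ : ι → κ)
    {N : ℕ} (hg : 0 ≤ g) (hgs : Summable g) (hfg : ∀ i, f i ≤ g (φ i))
    (hN : ∀ k, (φ ⁻¹' {k}).encard ≤ N) :
    ∑' i, f i ≤ N * ∑' k, g k := by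
  classical
  refine tsum_le_of_sum_le' (mul_nonneg N.cast_nonneg (tsum_nonneg hg)) fun s => ?_
  have hfib : ∀ k, (s.filter (φ · = k)).card ≤ N := fun k => by
    rw [← ENat.natCast_le_natCast, ← Set.encard_coe_eq_coe_finsetCard]
    exact (Set.encard_le_encard fun i hi => (Finset.mem_filter.mp hi).2).trans (hN k)
  calc ∑ i ∈ s, f i ≤ ∑ i ∈ s, g (φ i) := Finset.sum_le_sum fun i _ => hfg i
    _ = ∑ k ∈ s.image φ, (s.filter (φ · = k)).card • g k := Finset.sum_comp g φ
    _ ≤ ∑ k ∈ s.image φ, N * g k := Finset.sum_le_sum fun k _ => by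
        rw [nsmul_eq_mul]
        exact mul_le_mul_of_nonneg_right (by exact_mod_cast hfib k) (hg k)
    _ = N * ∑ k ∈ s.image φ, g k := (Finset.mul_sum _ _ _).symm
    _ ≤ N * ∑' k, g k :=
        mul_le_mul_of_nonneg_left (hgs.sum_le_tsum _ fun k _ => hg k) N.cast_nonneg

theorem stmt_3 (P Q α C : ℝ) (hP : 0 < P) (hQ : 0 < Q) (hC : 0 < C)
    (u : ℝ × ℝ) (Z ζ : ℝ) (hZ : 0 < Z) (hζ : 0 < ζ) :
    (∑' p : ℤ × ℤ,
        Real.exp (-C * ((P * ((p.1 : ℝ) + α * p.2) + u.1) ^ 2 + (Q * (p.2 : ℝ) + u.2) ^ 2)))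
      ≤ (1 + (Set.ncard {p : ℤ × ℤ |
            Real.sqrt ((Real.sqrt (Z / ζ) * ((p.1 : ℝ) + α * p.2)) ^ 2
              + (Real.sqrt (ζ / Z) * (p.2 : ℝ)) ^ 2)
            ≤ Real.sqrt 2 * Real.sqrt (Z * ζ)} : ℝ)) *
        ∑' m : ℤ × ℤ,
          Real.exp (-C * ((P * ζ * (m.1 : ℝ)) ^ 2 + (Q * Z * (m.2 : ℝ)) ^ 2) / 4) := by
  set B : Set (ℤ × ℤ) := {p | √((√(Z / ζ) * ((p.1 : ℝ) + α * p.2)) ^ 2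
    + (√(ζ / Z) * (p.2 : ℝ)) ^ 2) ≤ √2 * √(Z * ζ)}
  have hB : ∀ p : ℤ × ℤ, p ∈ B ↔ (((p.1 : ℝ) + α * p.2) / ζ) ^ 2 + ((p.2 : ℝ) / Z) ^ 2 ≤ 2 :=
    fun p => sqrt_unimodular_le_iff hZ hζ _ _
  have hBfin : B.Finite :=
    (finite_setOf_div_sq_add_div_sq_le_two hζ hZ α).subset fun p => (hB p).mp
  let φ : ℤ × ℤ → ℤ × ℤ := fun p =>
    (round ((P * ((p.1 : ℝ) + α * p.2) + u.1) / (P * ζ)), round ((Q * (p.2 : ℝ) + u.2) / (Q * Z)))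
  have hfib : ∀ p q, φ p = φ q → p - q ∈ B := fun p q h => by
    obtain ⟨h₁, h₂⟩ := Prod.ext_iff.mp h
    have e₁ := div_sq_le_one_of_abs_le hζ (abs_sub_le_of_round_affine_eq hP hζ h₁)
    have e₂ := div_sq_le_one_of_abs_le hZ (abs_sub_le_of_round_affine_eq hQ hZ h₂)
    rw [hB, Prod.fst_sub, Prod.snd_sub, Int.cast_sub, Int.cast_sub,
      show (p.1 : ℝ) - q.1 + α * (p.2 - q.2) = p.1 + α * p.2 - (q.1 + α * q.2) by ring]
    linarith
  have hpoint : ∀ p : ℤ × ℤ,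
      exp (-C * ((P * ((p.1 : ℝ) + α * p.2) + u.1) ^ 2 + (Q * (p.2 : ℝ) + u.2) ^ 2))
        ≤ exp (-C * ((P * ζ * ((φ p).1 : ℝ)) ^ 2 + (Q * Z * ((φ p).2 : ℝ)) ^ 2) / 4) := fun p => by
    have h₁ := sq_mul_round_div_le (mul_pos hP hζ) (P * ((p.1 : ℝ) + α * p.2) + u.1)
    have h₂ := sq_mul_round_div_le (mul_pos hQ hZ) (Q * (p.2 : ℝ) + u.2)
    exact exp_le_exp.mpr (by nlinarith)
  have hgs : Summable fun m : ℤ × ℤ =>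
      exp (-C * ((P * ζ * (m.1 : ℝ)) ^ 2 + (Q * Z * (m.2 : ℝ)) ^ 2) / 4) := by
    refine (summable_exp_neg_int_sq_add_sq (a := C * (P * ζ) ^ 2 / 4) (b := C * (Q * Z) ^ 2 / 4)
      (by positivity) (by positivity)).congr fun m => by ring_nf
  calc _ ≤ (B.ncard : ℝ) * _ := tsum_le_mul_tsum_of_encard_fiber_le φ (fun _ => (exp_pos _).le)
        hgs hpoint fun k =>
          (encard_preimage_singleton_le_of_sub_mem hfib k).trans_eq hBfin.cast_ncard_eq.symm
    _ ≤ _ := by gcongr; linarith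
end

section
/- Let α be Diophantine and ε > 0. Then for N, M ≥ 1, the number of integers z with 1 ≤ z ≤ 2MN and ‖αz‖_ℤ ≤ 1/N is ≪_ε M(MN)^{ε}, where ‖·‖_ℤ is the distance to the nearest integer. -/
open scoped Classical

/-- Distance to the nearest integer. -/
noncomputable def distZ (x : ℝ) : ℝ := |x - round x|

/-!
Two solutions `z₁ < z₂ ≤ L` of `‖αz‖ ≤ 1/N` give `‖α(z₂ - z₁)‖ ≤ 2/N`, while the
Diophantine bound gives `‖αq‖ ≥ c q^{-(1+ε)} ≥ c L^{-ε} / q`. Hence the solutions are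
`c N / (2 L^ε)`-separated, so there are at most `2 L^{1+ε} / (c N) + 1` of them in `[1, L]`;
for `L = 2MN` this is `≪ M (MN)^ε`.
-/

lemma distZ_sub_le (x y : ℝ) : distZ (x - y) ≤ distZ x + distZ y := by
  calc distZ (x - y) ≤ |x - y - ((round x - round y : ℤ) : ℝ)| := round_le _ _
    _ = |(x - round x) - (y - round y)| := by push_cast; ring_nf
    _ ≤ distZ x + distZ y := abs_sub _ _

lemma distZ_mul_natCast_ge {α c δ : ℝ}
    (hα : ∀ (p : ℤ) (q : ℕ), 0 < q →
      c * (q : ℝ) ^ (-(2 + δ)) ≤ |α - (p : ℝ) / (q : ℝ)|)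
    {q : ℕ} (hq : 0 < q) : c * (q : ℝ) ^ (-(1 + δ)) ≤ distZ (α * q) := by
  have hqR : (0 : ℝ) < q := by exact_mod_cast hq
  calc c * (q : ℝ) ^ (-(1 + δ)) = q * (c * (q : ℝ) ^ (-(2 + δ))) := by
        rw [show -(1 + δ) = 1 + -(2 + δ) by ring, Real.rpow_add hqR, Real.rpow_one]; ring
    _ ≤ q * |α - (round (α * q) : ℝ) / q| := by gcongr; exact hα _ _ hq
    _ = distZ (α * q) := by
        rw [distZ, ← abs_of_pos hqR, ← abs_mul, abs_of_pos hqR, mul_sub,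
          mul_div_cancel₀ _ hqR.ne', mul_comm]

lemma div_le_sub_of_distZ_le {α c δ η : ℝ} (hδ : 0 ≤ δ) (hη : 0 < η)
    (hα : ∀ (p : ℤ) (q : ℕ), 0 < q →
      c * (q : ℝ) ^ (-(2 + δ)) ≤ |α - (p : ℝ) / (q : ℝ)|)
    {L z₁ z₂ : ℕ} (h₁₂ : z₁ < z₂) (h₂ : z₂ ≤ L)
    (hz₁ : distZ (α * z₁) ≤ η) (hz₂ : distZ (α * z₂) ≤ η) :
    c / (2 * η * (L : ℝ) ^ δ) ≤ (z₂ : ℝ) - z₁ := by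
  set q := z₂ - z₁ with hq_def
  have hq : 0 < q := Nat.sub_pos_of_lt h₁₂
  have hqR : (0 : ℝ) < q := by exact_mod_cast hq
  have hqL : (q : ℝ) ≤ L := by exact_mod_cast (Nat.sub_le z₂ z₁).trans h₂
  have hgap : c * (q : ℝ) ^ (-(1 + δ)) ≤ 2 * η := by
    calc c * (q : ℝ) ^ (-(1 + δ)) ≤ distZ (α * q) := distZ_mul_natCast_ge hα hq
      _ = distZ (α * z₂ - α * z₁) := by rw [hq_def, Nat.cast_sub h₁₂.le, mul_sub]
      _ ≤ 2 * η := by linarith [distZ_sub_le (α * z₂) (α * z₁)]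
  have hc : c ≤ 2 * η * (q : ℝ) ^ δ * q := by
    have hpow : (q : ℝ) ^ (1 + δ) * (q : ℝ) ^ (-(1 + δ)) = 1 := by
      rw [← Real.rpow_add hqR, add_neg_cancel, Real.rpow_zero]
    calc c = (q : ℝ) ^ (1 + δ) * (c * (q : ℝ) ^ (-(1 + δ))) := by
          rw [mul_left_comm, hpow, mul_one]
      _ ≤ (q : ℝ) ^ (1 + δ) * (2 * η) := by gcongr
      _ = 2 * η * (q : ℝ) ^ δ * q := by
          rw [add_comm, Real.rpow_add hqR, Real.rpow_one]; ring
  have hL : (0 : ℝ) < L := hqR.trans_le hqL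
  rw [← Nat.cast_sub h₁₂.le, div_le_iff₀ (by positivity)]
  calc c ≤ 2 * η * (q : ℝ) ^ δ * q := hc
    _ ≤ 2 * η * (L : ℝ) ^ δ * q := by gcongr
    _ = q * (2 * η * (L : ℝ) ^ δ) := by ring

lemma Finset.card_le_div_add_one_of_separated {S : Finset ℕ} {L : ℕ} {D : ℝ} (hD : 0 < D)
    (hSL : ∀ z ∈ S, z ≤ L) (hsep : ∀ a ∈ S, ∀ b ∈ S, a < b → D ≤ (b : ℝ) - a) :
    (S.card : ℝ) ≤ L / D + 1 := by
  have hmaps : ∀ z ∈ S, ⌊(z : ℝ) / D⌋₊ ∈ range (⌊(L : ℝ) / D⌋₊ + 1) := by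
    intro z hz
    rw [mem_range, Nat.lt_succ_iff]
    exact Nat.floor_le_floor (by gcongr; exact_mod_cast hSL z hz)
  have hmono : StrictMonoOn (fun z : ℕ => ⌊(z : ℝ) / D⌋₊) S := by
    intro a ha b hb hab
    have hstep : (a : ℝ) / D + 1 ≤ b / D := by
      rw [div_add_one hD.ne', div_le_div_iff_of_pos_right hD]
      linarith [hsep a ha b hb hab]
    calc ⌊(a : ℝ) / D⌋₊ < ⌊(a : ℝ) / D + 1⌋₊ := by
          rw [Nat.floor_add_one (by positivity)]; exact Nat.lt_succ_self _
      _ ≤ ⌊(b : ℝ) / D⌋₊ := Nat.floor_le_floor hstep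
  calc (S.card : ℝ) ≤ (range (⌊(L : ℝ) / D⌋₊ + 1)).card := by
        exact_mod_cast card_le_card_of_injOn _ hmaps hmono.injOn
    _ = ⌊(L : ℝ) / D⌋₊ + 1 := by simp
    _ ≤ L / D + 1 := by gcongr; exact Nat.floor_le (by positivity)

theorem stmt_6 (α : ℝ)
    (hdio : ∀ δ > (0 : ℝ), ∃ c > (0 : ℝ), ∀ (p : ℤ) (q : ℕ), 0 < q →
      c * (q : ℝ) ^ (-(2 + δ)) ≤ |α - (p : ℝ) / (q : ℝ)|)
    (ε : ℝ) (hε : 0 < ε) :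
    ∃ C > (0 : ℝ), ∀ N M : ℕ, 1 ≤ N → 1 ≤ M →
      (((Finset.Icc 1 (2 * M * N)).filter
          (fun z : ℕ => distZ (α * z) ≤ 1 / (N : ℝ))).card : ℝ)
        ≤ C * (M : ℝ) * ((M : ℝ) * (N : ℝ)) ^ ε := by
  obtain ⟨c, hc, hα⟩ := hdio ε hε
  refine ⟨4 * 2 ^ ε / c + 1, by positivity, fun N M hN hM => ?_⟩
  have hNR : (1 : ℝ) ≤ N := by exact_mod_cast hN
  have hMR : (1 : ℝ) ≤ M := by exact_mod_cast hM
  set L := 2 * M * N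
  set S := (Finset.Icc 1 L).filter (fun z : ℕ => distZ (α * z) ≤ 1 / (N : ℝ))
  set D := c / (2 * (1 / (N : ℝ)) * (L : ℝ) ^ ε)
  have hSL : ∀ z ∈ S, z ≤ L := fun z hz => (Finset.mem_Icc.1 (Finset.mem_filter.1 hz).1).2
  have hsep : ∀ a ∈ S, ∀ b ∈ S, a < b → D ≤ (b : ℝ) - a := fun a ha b hb hab =>
    div_le_sub_of_distZ_le hε.le (by positivity) hα hab (hSL b hb)
      (Finset.mem_filter.1 ha).2 (Finset.mem_filter.1 hb).2
  have hLD : (L : ℝ) / D = 4 * 2 ^ ε / c * M * ((M : ℝ) * N) ^ ε := by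
    simp only [D, L, Nat.cast_mul, Nat.cast_ofNat]
    rw [mul_assoc 2 (M : ℝ), Real.mul_rpow (by norm_num) (by positivity)]
    field_simp
    norm_num
  have hMN : (1 : ℝ) ≤ M * N := one_le_mul_of_one_le_of_one_le hMR hNR
  have hone : (1 : ℝ) ≤ M * ((M : ℝ) * N) ^ ε :=
    one_le_mul_of_one_le_of_one_le hMR (Real.one_le_rpow hMN hε.le)
  calc (S.card : ℝ) ≤ L / D + 1 := S.card_le_div_add_one_of_separated (by positivity) hSL hsep
    _ ≤ 4 * 2 ^ ε / c * M * ((M : ℝ) * N) ^ ε + M * ((M : ℝ) * N) ^ ε := by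
        rw [hLD]; gcongr
    _ = _ := by ring
end

section
/- Let α be Diophantine and ε > 0. Then for N, M ≥ 1, Σ_{1≤z≤2NM, ‖αz‖_ℤ > 1/N} 1/‖αz‖_ℤ ≪_ε (MN)^{1+ε}. -/
open scoped Classical

/-!
Write `‖·‖` for `distZ`. For `z₁ ≠ z₂` in `[1, Z]` we have
`|‖αz₁‖ - ‖αz₂‖| ≥ min (‖α(z₁ - z₂)‖, ‖α(z₁ + z₂)‖)`, and the Diophantine condition bounds both
terms below by `c (2Z)^{-(1+δ)}`. So the values `‖αz‖` lying in `(1/N, 1/2]` are `1/y`-separated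
with `y ≍ (NM)^{1+δ}`, and the sum of their reciprocals is at most `N + y H_{⌊y/2⌋} ≪ y^{1+δ}`.
Choosing `(1 + δ)² = 1 + ε` gives the claim.
-/

lemma min_abs_sub_abs_add_le_abs_abs_sub_abs (X Y : ℝ) :
    min |X - Y| |X + Y| ≤ |(|X| - |Y|)| := by
  rcases abs_cases X with ⟨hX, -⟩ | ⟨hX, -⟩ <;> rcases abs_cases Y with ⟨hY, -⟩ | ⟨hY, -⟩ <;>
    rw [hX, hY]
  · exact min_le_left _ _
  · rw [sub_neg_eq_add]; exact min_le_right _ _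
  · exact (min_le_right _ _).trans_eq (by rw [← abs_neg]; congr 1; ring)
  · exact (min_le_left _ _).trans_eq (by rw [← abs_neg]; congr 1; ring)

lemma min_distZ_sub_distZ_add_le (a b : ℝ) :
    min (distZ (a - b)) (distZ (a + b)) ≤ |distZ a - distZ b| := by
  refine le_trans (min_le_min ?_ ?_) (min_abs_sub_abs_add_le_abs_abs_sub_abs _ _)
  · exact (round_le _ (round a - round b)).trans_eq (by push_cast; ring_nf)
  · exact (round_le _ (round a + round b)).trans_eq (by push_cast; ring_nf)

lemma div_rpow_le_distZ_mul {α c δ : ℝ}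
    (hdc : ∀ (p : ℤ) (q : ℕ), 0 < q → c * (q : ℝ) ^ (-(2 + δ)) ≤ |α - (p : ℝ) / (q : ℝ)|)
    (hc : 0 ≤ c) (hδ : 0 ≤ 1 + δ) {q : ℕ} (hq : 0 < q) {Q : ℝ} (hqQ : (q : ℝ) ≤ Q) :
    c / Q ^ (1 + δ) ≤ distZ (α * q) := by
  have hq' : (0 : ℝ) < q := by exact_mod_cast hq
  have h := hdc (round (α * q)) q hq
  rw [Real.rpow_neg hq'.le, show 2 + δ = (1 + δ) + 1 by ring, Real.rpow_add hq',
    Real.rpow_one] at h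
  calc c / Q ^ (1 + δ) ≤ c / (q : ℝ) ^ (1 + δ) := by gcongr
    _ = c * ((q : ℝ) ^ (1 + δ) * q)⁻¹ * q := by field_simp
    _ ≤ |α - (round (α * q) : ℝ) / q| * q := by gcongr
    _ = |(α - (round (α * q) : ℝ) / q) * q| := by rw [abs_mul, abs_of_pos hq']
    _ = distZ (α * q) := by rw [distZ]; congr 1; field_simp

lemma le_abs_distZ_sub_of_le_distZ {α η : ℝ} {Z : ℕ}
    (hη : ∀ q : ℕ, 0 < q → q ≤ 2 * Z → η ≤ distZ (α * q))
    {z₁ z₂ : ℕ} (h₁ : z₁ ≤ Z) (h₂ : z₂ ≤ Z) (hne : z₁ ≠ z₂) :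
    η ≤ |distZ (α * z₁) - distZ (α * z₂)| := by
  wlog hlt : z₂ < z₁ generalizing z₁ z₂
  · rw [abs_sub_comm]; exact this h₂ h₁ hne.symm (by omega)
  refine le_trans (le_min ?_ ?_) (min_distZ_sub_distZ_add_le _ _)
  · have := hη (z₁ - z₂) (by omega) (by omega)
    rwa [Nat.cast_sub hlt.le, mul_sub] at this
  · have := hη (z₁ + z₂) (by omega) (by omega)
    rwa [Nat.cast_add, mul_add] at this

lemma sum_one_div_le_of_separated {ι : Type*} (s : Finset ι) (t : ι → ℝ) {a b y : ℝ}
    (ha : 0 < a) (hy : 0 < y) (hlow : ∀ i ∈ s, a ≤ t i) (hupp : ∀ i ∈ s, t i ≤ b)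
    (hsep : ∀ i ∈ s, ∀ j ∈ s, i ≠ j → 1 / y ≤ |t i - t j|) :
    ∑ i ∈ s, 1 / t i ≤ 1 / a + y * harmonic ⌊b * y⌋₊ := by
  -- distinct points lie in distinct cells `[a + k / y, a + (k + 1) / y)`
  set k : ι → ℕ := fun i => ⌊(t i - a) * y⌋₊
  have hnonneg : ∀ i ∈ s, 0 ≤ (t i - a) * y := fun i hi =>
    mul_nonneg (sub_nonneg.2 (hlow i hi)) hy.le
  have hk_le : ∀ i ∈ s, a + k i / y ≤ t i := fun i hi => by
    have := (div_le_iff₀ hy).2 (Nat.floor_le (hnonneg i hi))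
    linarith
  have hk_inj : Set.InjOn k s := by
    intro i hi j hj hij
    by_contra hne
    have hi' := Nat.lt_floor_add_one ((t i - a) * y)
    have hj' := Nat.lt_floor_add_one ((t j - a) * y)
    have hki := Nat.floor_le (hnonneg i hi)
    have hkj := Nat.floor_le (hnonneg j hj)
    have hlt : |t i - t j| * y < 1 := by
      rw [← abs_of_pos hy, ← abs_mul, abs_lt]
      simp only [k] at hij
      rw [hij] at hi' hki
      constructor <;> linarith
    have := hsep i hi j hj hne
    rw [div_le_iff₀ hy] at this
    linarith
  have hk_range : ∀ i ∈ s, k i ∈ Finset.range (⌊b * y⌋₊ + 1) := fun i hi => by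
    rw [Finset.mem_range, Nat.lt_succ_iff]
    exact Nat.floor_le_floor (by nlinarith [hupp i hi])
  calc ∑ i ∈ s, 1 / t i ≤ ∑ i ∈ s, 1 / (a + k i / y) := by
        gcongr with i hi
        exact hk_le i hi
    _ = ∑ j ∈ s.image k, 1 / (a + j / y) :=
        (Finset.sum_image (f := fun j : ℕ => 1 / (a + j / y)) hk_inj).symm
    _ ≤ ∑ j ∈ Finset.range (⌊b * y⌋₊ + 1), 1 / (a + j / y) := by
        apply Finset.sum_le_sum_of_subset_of_nonneg
        · simpa only [Finset.image_subset_iff] using hk_range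
        · intro j _ _; positivity
    _ = ∑ j ∈ Finset.range ⌊b * y⌋₊, 1 / (a + (j + 1 : ℕ) / y) + 1 / a := by
        rw [Finset.sum_range_succ']; simp
    _ ≤ ∑ j ∈ Finset.range ⌊b * y⌋₊, y * ((j : ℝ) + 1)⁻¹ + 1 / a := by
        gcongr with j
        have : 1 / (a + ((j + 1 : ℕ) : ℝ) / y) ≤ 1 / (((j + 1 : ℕ) : ℝ) / y) := by
          gcongr; linarith
        simpa [one_div_div, div_eq_mul_inv] using this
    _ = 1 / a + y * harmonic ⌊b * y⌋₊ := by
        rw [add_comm, ← Finset.mul_sum, harmonic]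
        push_cast
        rfl

lemma sum_one_div_distZ_le {α y : ℝ} {N Z : ℕ} (hN : 0 < N) (hy : 0 < y)
    (hsep : ∀ q : ℕ, 0 < q → q ≤ 2 * Z → 1 / y ≤ distZ (α * q))
    (s : Finset ℕ) (hs : ∀ z ∈ s, z ≤ Z) :
    ∑ z ∈ s.filter (fun z : ℕ => 1 / (N : ℝ) < distZ (α * z)), 1 / distZ (α * z)
      ≤ N + y * harmonic ⌊y / 2⌋₊ := by
  have h := sum_one_div_le_of_separated (s.filter (fun z : ℕ => 1 / (N : ℝ) < distZ (α * z)))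
    (fun z => distZ (α * z)) (b := 1 / 2) (by positivity) hy
    (fun z hz => (Finset.mem_filter.1 hz).2.le) (fun z _ => abs_sub_round _)
    (fun z₁ h₁ z₂ h₂ => le_abs_distZ_sub_of_le_distZ hsep
      (hs z₁ (Finset.mem_filter.1 h₁).1) (hs z₂ (Finset.mem_filter.1 h₂).1))
  rwa [one_div_one_div, one_div_mul_eq_div] at h

lemma mul_harmonic_le_rpow {y θ : ℝ} (hy : 1 ≤ y) (hθ : 0 < θ) {K : ℕ} (hK : (K : ℝ) ≤ y) :
    y * harmonic K ≤ (1 + 1 / θ) * y ^ (1 + θ) := by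
  have hlog : Real.log K ≤ y ^ θ / θ :=
    (Real.log_le_rpow_div K.cast_nonneg hθ).trans (by gcongr)
  have hyθ : 1 ≤ y ^ θ := Real.one_le_rpow hy hθ.le
  calc y * harmonic K ≤ y * (1 + y ^ θ / θ) := by
        gcongr; linarith [harmonic_le_one_add_log K]
    _ ≤ y * ((1 + 1 / θ) * y ^ θ) := by
        gcongr
        rw [add_mul, one_mul, one_div_mul_eq_div]
        linarith
    _ = (1 + 1 / θ) * y ^ (1 + θ) := by
        rw [Real.rpow_add (by linarith), Real.rpow_one]; ring

lemma exists_pos_one_add_mul_self_eq {ε : ℝ} (hε : 0 < ε) :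
    ∃ δ > 0, (1 + δ) * (1 + δ) = 1 + ε :=
  ⟨√(1 + ε) - 1, by rw [gt_iff_lt, sub_pos, Real.lt_sqrt zero_le_one]; linarith,
    by rw [add_sub_cancel, Real.mul_self_sqrt (by linarith)]⟩

theorem stmt_7 (α : ℝ)
    (hdio : ∀ δ > (0 : ℝ), ∃ c > (0 : ℝ), ∀ (p : ℤ) (q : ℕ), 0 < q →
      c * (q : ℝ) ^ (-(2 + δ)) ≤ |α - (p : ℝ) / (q : ℝ)|)
    (ε : ℝ) (hε : 0 < ε) :
    ∃ C > (0 : ℝ), ∀ N M : ℕ, 1 ≤ N → 1 ≤ M →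
      (∑ z ∈ (Finset.Icc 1 (2 * N * M)).filter
          (fun z : ℕ => 1 / (N : ℝ) < distZ (α * z)),
        1 / distZ (α * z))
        ≤ C * ((M : ℝ) * (N : ℝ)) ^ ((1 : ℝ) + ε) := by
  obtain ⟨δ, hδ, hδδ⟩ := exists_pos_one_add_mul_self_eq hε
  obtain ⟨c, hc, hdc⟩ := hdio δ hδ
  have hc_half : c ≤ 1 / 2 := by
    have := div_rpow_le_distZ_mul hdc hc.le (by linarith) one_pos le_rfl
    simp only [Nat.cast_one, Real.one_rpow, div_one, mul_one] at this
    exact this.trans (abs_sub_round α)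
  refine ⟨1 + (1 + 1 / δ) * (4 ^ (1 + δ) / c) ^ (1 + δ), by positivity, fun N M hN hM => ?_⟩
  set x : ℝ := M * N
  have hx : 1 ≤ x := one_le_mul_of_one_le_of_one_le (by exact_mod_cast hM) (by exact_mod_cast hN)
  set y : ℝ := (4 * x) ^ (1 + δ) / c
  have hy : 1 ≤ y := by
    rw [le_div_iff₀ hc, one_mul]
    linarith [Real.one_le_rpow (by linarith : (1 : ℝ) ≤ 4 * x) (by linarith : 0 ≤ 1 + δ)]
  have hsep : ∀ q : ℕ, 0 < q → q ≤ 2 * (2 * N * M) → 1 / y ≤ distZ (α * q) := fun q hq hqZ => by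
    rw [one_div_div]
    refine div_rpow_le_distZ_mul hdc hc.le (by linarith) hq ?_
    have : (q : ℝ) ≤ ((2 * (2 * N * M) : ℕ) : ℝ) := by exact_mod_cast hqZ
    push_cast at this; linarith
  have hN_le : (N : ℝ) ≤ x ^ (1 + ε) :=
    (le_mul_of_one_le_left (by positivity) (by exact_mod_cast hM)).trans
      (Real.self_le_rpow_of_one_le hx (by linarith))
  have hy_eq : y = 4 ^ (1 + δ) / c * x ^ (1 + δ) := by
    rw [show y = (4 * x) ^ (1 + δ) / c from rfl, Real.mul_rpow (by norm_num) (by positivity)]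
    ring
  have hy_pow : y ^ (1 + δ) = (4 ^ (1 + δ) / c) ^ (1 + δ) * x ^ (1 + ε) := by
    rw [hy_eq, Real.mul_rpow (by positivity) (by positivity), ← Real.rpow_mul (by positivity), hδδ]
  calc _ ≤ N + y * harmonic ⌊y / 2⌋₊ :=
        sum_one_div_distZ_le hN (by positivity) hsep _ fun z hz => (Finset.mem_Icc.1 hz).2
    _ ≤ x ^ (1 + ε) + (1 + 1 / δ) * y ^ (1 + δ) :=
        add_le_add hN_le (mul_harmonic_le_rpow hy hδ ((Nat.floor_le (by positivity)).trans
          (by linarith)))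
    _ = (1 + (1 + 1 / δ) * (4 ^ (1 + δ) / c) ^ (1 + δ)) * x ^ (1 + ε) := by rw [hy_pow]; ring
end

section
/- For any 𝔷 = 𝔞 + i𝔟 in the upper half-plane and any ξ ∈ ℝ², Σ_{(x,y)∈ℤ², |x|≠|y|} exp(Ω_{𝔷,ξ}(x,y)) = Σ_{(x,y)∈ℤ², xy≠0} Ψ_{𝔷,ξ}(x,y) + Σ_{(x,y)∈ℤ²} Ψ_{𝔷,ξ}(x − 1/2, y + 1/2), where Ω_{𝔷,ξ}(x,y) = πi(𝔞(x²−y²) + i𝔟(x²+y²)) + 2πi⟨ξ,(x,y)⟩ and Ψ_{𝔷,ξ}(x,y) = exp(Ω_{𝔷,ξ}(x+y, x−y)). -/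
/-!
Split the points of `ℤ²` with `|x| ≠ |y|` by the parity of `x + y`. The even ones are exactly
`(u + v, u - v)` with `u v ≠ 0`, giving the sum of `Ψ` over `x y ≠ 0`; the odd ones all satisfy
`|x| ≠ |y|` and are exactly `(u + v, u - v - 1) = ((u - ½) + (v + ½), (u - ½) - (v + ½))`, giving
the shifted sum. Regrouping is legitimate because `exp Ω` is a product of two Jacobi theta terms
with parameters `𝔷` and `-conj 𝔷`, both in the upper half-plane, so the double series converges
absolutely.
-/

open Complex

/-- `Ω_{𝔷,ξ}(x,y) = πi(𝔞(x²−y²) + i𝔟(x²+y²)) + 2πi⟨ξ,(x,y)⟩`. -/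
noncomputable def Omega (a b : ℝ) (ξ : ℝ × ℝ) (x y : ℝ) : ℂ :=
  Real.pi * Complex.I * ((a : ℂ) * ((x : ℂ) ^ 2 - (y : ℂ) ^ 2)
      + Complex.I * (b : ℂ) * ((x : ℂ) ^ 2 + (y : ℂ) ^ 2))
    + 2 * Real.pi * Complex.I * ((ξ.1 : ℂ) * (x : ℂ) + (ξ.2 : ℂ) * (y : ℂ))

/-- `Ψ_{𝔷,ξ}(x,y) = exp(Ω_{𝔷,ξ}(x+y, x−y))`. -/
noncomputable def Psi (a b : ℝ) (ξ : ℝ × ℝ) (x y : ℝ) : ℂ :=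
  Complex.exp (Omega a b ξ (x + y) (x - y))

lemma exp_Omega_eq_jacobiTheta₂_term_mul (a b : ℝ) (ξ : ℝ × ℝ) (q : ℤ × ℤ) :
    exp (Omega a b ξ q.1 q.2)
      = jacobiTheta₂_term q.1 ξ.1 (a + b * I) * jacobiTheta₂_term q.2 ξ.2 (-a + b * I) := by
  rw [jacobiTheta₂_term, jacobiTheta₂_term, ← exp_add, Omega]
  push_cast
  ring_nf

lemma summable_exp_Omega (a : ℝ) {b : ℝ} (hb : 0 < b) (ξ : ℝ × ℝ) :
    Summable fun q : ℤ × ℤ => exp (Omega a b ξ q.1 q.2) := by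
  have summable_norm_term (x : ℝ) (τ : ℂ) (hτ : 0 < τ.im) :
      Summable fun n : ℤ => ‖jacobiTheta₂_term n x τ‖ :=
    summable_norm_iff.mpr ((summable_jacobiTheta₂_term_iff _ _).mpr hτ)
  refine (summable_mul_of_summable_norm (summable_norm_term ξ.1 (a + b * I) (by simpa using hb))
    (summable_norm_term ξ.2 (-a + b * I) (by simpa using hb))).congr fun q => ?_
  exact (exp_Omega_eq_jacobiTheta₂_term_mul a b ξ q).symm

lemma Psi_sub_half_add_half (a b : ℝ) (ξ : ℝ × ℝ) (x y : ℝ) :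
    Psi a b ξ (x - 1 / 2) (y + 1 / 2) = exp (Omega a b ξ (x + y) (x - y - 1)) := by
  rw [Psi]
  ring_nf

lemma Int.abs_add_ne_abs_sub_iff {u v : ℤ} : |u + v| ≠ |u - v| ↔ u * v ≠ 0 := by
  simp only [mul_ne_zero_iff, Int.abs_eq_natAbs]
  omega

lemma Int.abs_ne_abs_of_odd_add {x y : ℤ} (h : Odd (x + y)) : |x| ≠ |y| := by
  rw [Int.odd_iff] at h
  simp only [Int.abs_eq_natAbs]
  omega

def sumDiffEquiv : {p : ℤ × ℤ // p.1 * p.2 ≠ 0} ⊕ (ℤ × ℤ) ≃ {q : ℤ × ℤ // |q.1| ≠ |q.2|} where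
  toFun
    | .inl p => ⟨(p.1.1 + p.1.2, p.1.1 - p.1.2), Int.abs_add_ne_abs_sub_iff.mpr p.2⟩
    | .inr p => ⟨(p.1 + p.2, p.1 - p.2 - 1),
        Int.abs_ne_abs_of_odd_add (by rw [Int.odd_iff]; omega)⟩
  invFun q :=
    if h : Even (q.1.1 + q.1.2) then
      .inl ⟨((q.1.1 + q.1.2) / 2, (q.1.1 - q.1.2) / 2), by
        have := q.2
        rw [Int.even_iff] at h
        simp only [mul_ne_zero_iff, Int.abs_eq_natAbs] at this ⊢
        omega⟩
    else .inr ((q.1.1 + q.1.2 + 1) / 2, (q.1.1 - q.1.2 - 1) / 2)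
  left_inv := by
    rintro (p | p)
    · dsimp only
      rw [dif_pos ⟨p.1.1, by ring⟩, Sum.inl.injEq]
      ext <;> dsimp only <;> omega
    · dsimp only
      rw [dif_neg (by rw [Int.not_even_iff]; omega), Sum.inr.injEq]
      ext <;> dsimp only <;> omega
  right_inv q := by
    by_cases h : Even (q.1.1 + q.1.2) <;> simp only [h, dite_true, dite_false] <;>
      rw [Int.even_iff] at h <;> ext <;> dsimp only <;> omega

theorem stmt_8 (a b : ℝ) (hb : 0 < b) (ξ : ℝ × ℝ) :
    (∑' p : {p : ℤ × ℤ // |p.1| ≠ |p.2|}, Complex.exp (Omega a b ξ (p.1.1 : ℝ) (p.1.2 : ℝ)))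
      = (∑' p : {p : ℤ × ℤ // p.1 * p.2 ≠ 0}, Psi a b ξ (p.1.1 : ℝ) (p.1.2 : ℝ))
        + ∑' p : ℤ × ℤ, Psi a b ξ ((p.1 : ℝ) - 1 / 2) ((p.2 : ℝ) + 1 / 2) := by
  set F : {q : ℤ × ℤ // |q.1| ≠ |q.2|} → ℂ := fun q => exp (Omega a b ξ q.1.1 q.1.2)
  have hF : Summable (F ∘ sumDiffEquiv) :=
    ((summable_exp_Omega a hb ξ).subtype _).comp_injective sumDiffEquiv.injective
  rw [← sumDiffEquiv.tsum_eq F]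
  refine (Summable.tsum_sum (f := F ∘ sumDiffEquiv) (hF.comp_injective Sum.inl_injective)
    (hF.comp_injective Sum.inr_injective)).trans ?_
  congr 1 <;> refine tsum_congr fun p => ?_
  · simp [F, sumDiffEquiv, Psi]
  · rw [Function.comp_apply, Psi_sub_half_add_half]
    simp [F, sumDiffEquiv]
end
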